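/- arXiv:1504.02089 — 8 statements merged into one kernel-verified Lean document; each statement's English description precedes it below -/
import Mathlib

section
/- Fix integers N ≥ 1 and T ≥ 1 with N·T ≥ 3, and a learning rate η > 0. Let f_1, f_2, … : {1,…,N} → [0,∞) be nonnegative loss functions and run the MW¹ recursion with mixing parameter γ = 1/T. Then for any rounds t0 ≤ t1 with t1 − t0 + 1 ≤ T, the distributions q_t satisfy: Σ_{t=t0}^{t1} Σ_{x=1}^{N} q_t(x)·f_t(x) − min_{x∈{1,…,N}} Σ_{t=t0}^{t1} f_t(x) ≤ (2·log(N·T))/η + η · Σ_{t=t0}^{t1} Σ_{x=1}^{N} q_t(x)·f_t(x)². -/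
/-!
Potential argument on `log W_t`. Since `exp (-z) ≤ 1 - z + z ^ 2` for `z ≥ 0` and `1 + u ≤ exp u`,
each round gives `log W_{t+1} - log W_t ≤ γ - η ⟨q_t, f_t⟩ + η² ⟨q_t, f_t²⟩`, while `log w_t x`
drops by at most `η f_t x`. The mixing term keeps every weight at least a `γ / (N (1 + γ))` share of
the total weight, so comparing the two telescoped bounds over the window gives regret at most
`(log (N (T + 1)) + 1) / η + η Σ ⟨q_t, f_t²⟩` for `γ = 1 / T`, and `log (N (T + 1)) + 1 ≤ 2 log (N T)`
once `T ≥ 9`. For `T ≤ 8` the window is so short that the per-round AM-GM bound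
`⟨q, f⟩ ≤ 1 / (4 η) + η ⟨q, f²⟩` already suffices.
-/

open Finset Real

lemma exp_neg_le_one_sub_add_sq {z : ℝ} (hz : 0 ≤ z) : exp (-z) ≤ 1 - z + z ^ 2 := by
  have hpos : 0 < 1 + z := by linarith
  calc exp (-z) = (exp z)⁻¹ := exp_neg z
    _ ≤ (1 + z)⁻¹ := inv_anti₀ hpos (by linarith [add_one_le_exp z])
    _ ≤ 1 - z + z ^ 2 := by
      rw [inv_le_iff_one_le_mul₀ hpos]
      nlinarith [pow_nonneg hz 3]

lemma sub_le_sum_of_succ_sub_le {g h : ℕ → ℝ} {a b : ℕ} (hab : a ≤ b)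
    (H : ∀ t ∈ Icc a b, g (t + 1) - g t ≤ h t) : g (b + 1) - g a ≤ ∑ t ∈ Icc a b, h t := by
  rw [← sum_Icc_sub hab]
  exact sum_le_sum H

lemma one_le_log_of_three_le {x : ℝ} (hx : 3 ≤ x) : 1 ≤ log x := by
  rw [← log_exp 1]
  exact log_le_log (exp_pos 1) (by linarith [exp_one_lt_three])

lemma log_mul_add_one_add_one_le_two_mul_log {N T : ℝ} (hN : 1 ≤ N) (hT : 9 ≤ T) :
    log (N * (T + 1)) + 1 ≤ 2 * log (N * T) := by
  have hN0 : 0 < N := by linarith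
  have hT0 : 0 < T := by linarith
  have key : exp 1 * (N * (T + 1)) ≤ (N * T) ^ 2 :=
    calc exp 1 * (N * (T + 1)) ≤ 3 * (N * (T + 1)) := by gcongr; exact exp_one_lt_three.le
      _ = N * (3 * (T + 1)) := by ring
      _ ≤ N * (N * T ^ 2) := mul_le_mul_of_nonneg_left (by nlinarith) hN0.le
      _ = (N * T) ^ 2 := by ring
  calc log (N * (T + 1)) + 1 = log (exp 1 * (N * (T + 1))) := by
        rw [log_mul (exp_ne_zero 1) (by positivity), log_exp, add_comm]
    _ ≤ log ((N * T) ^ 2) := log_le_log (by positivity) key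
    _ = 2 * log (N * T) := by rw [log_pow]; norm_num

lemma sum_mul_le_inv_four_mul_add_mul_sum_mul_sq {ι : Type*} [Fintype ι] {η : ℝ} (hη : 0 < η)
    {q : ι → ℝ} (hq : ∀ x, 0 ≤ q x) (hq1 : ∑ x, q x = 1) (g : ι → ℝ) :
    ∑ x, q x * g x ≤ 1 / (4 * η) + η * ∑ x, q x * g x ^ 2 := by
  have amgm : ∀ x, g x ≤ 1 / (4 * η) + η * g x ^ 2 := fun x => by
    rw [← sub_nonneg]
    have : 1 / (4 * η) + η * g x ^ 2 - g x = η * (g x - 1 / (2 * η)) ^ 2 := by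
      field_simp; ring
    rw [this]; positivity
  calc ∑ x, q x * g x ≤ ∑ x, q x * (1 / (4 * η) + η * g x ^ 2) :=
        sum_le_sum fun x _ => mul_le_mul_of_nonneg_left (amgm x) (hq x)
    _ = 1 / (4 * η) + η * ∑ x, q x * g x ^ 2 := by
      simp only [mul_add, sum_add_distrib, ← sum_mul, hq1, mul_sum]; ring_nf

lemma sum_sum_mul_sub_sum_le {κ ι : Type*} [Fintype ι] {η : ℝ} (hη : 0 < η) {q f : κ → ι → ℝ}
    {s : Finset κ} (hq : ∀ t ∈ s, ∀ x, 0 ≤ q t x) (hq1 : ∀ t ∈ s, ∑ x, q t x = 1) {x : ι}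
    (hfx : ∀ t ∈ s, 0 ≤ f t x) :
    ∑ t ∈ s, ∑ y, q t y * f t y - ∑ t ∈ s, f t x
      ≤ (#s / 4) / η + η * ∑ t ∈ s, ∑ y, q t y * f t y ^ 2 := by
  have hround := sum_le_sum fun t ht =>
    sum_mul_le_inv_four_mul_add_mul_sum_mul_sq hη (hq t ht) (hq1 t ht) (f t)
  rw [sum_add_distrib, sum_const, nsmul_eq_mul, ← mul_sum] at hround
  have hL : 0 ≤ ∑ t ∈ s, f t x := sum_nonneg hfx
  have hconst : (#s : ℝ) * (1 / (4 * η)) = (#s / 4) / η := by field_simp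
  linarith

noncomputable def mw1Step {ι : Type*} [Fintype ι] (η γ : ℝ) (g w : ι → ℝ) : ι → ℝ :=
  fun x => w x * exp (-(η * g x)) + γ / Fintype.card ι * ∑ y, w y

section Step

variable {ι : Type*} [Fintype ι] {η γ : ℝ} {g w : ι → ℝ}

lemma mul_exp_le_mw1Step (hγ : 0 ≤ γ) (hw : ∀ x, 0 ≤ w x) (x : ι) :
    w x * exp (-(η * g x)) ≤ mw1Step η γ g w x :=
  le_add_of_nonneg_right (by have := sum_nonneg fun y (_ : y ∈ univ) => hw y; positivity)

lemma mix_le_mw1Step (hw : ∀ x, 0 ≤ w x) (x : ι) :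
    γ / Fintype.card ι * ∑ y, w y ≤ mw1Step η γ g w x :=
  le_add_of_nonneg_left (by have := hw x; positivity)

lemma mw1Step_pos (hγ : 0 ≤ γ) (hw : ∀ x, 0 < w x) (x : ι) : 0 < mw1Step η γ g w x :=
  (mul_pos (hw x) (exp_pos _)).trans_le (mul_exp_le_mw1Step hγ (fun y => (hw y).le) x)

lemma sum_mw1Step [Nonempty ι] :
    ∑ x, mw1Step η γ g w x = ∑ x, w x * exp (-(η * g x)) + γ * ∑ y, w y := by
  have hN : (Fintype.card ι : ℝ) ≠ 0 := Nat.cast_ne_zero.mpr Fintype.card_ne_zero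
  simp only [mw1Step, sum_add_distrib, sum_const, card_univ, nsmul_eq_mul]
  field_simp

lemma sum_mw1Step_le_one_add_mul [Nonempty ι] (hη : 0 ≤ η) (hg : ∀ x, 0 ≤ g x)
    (hw : ∀ x, 0 ≤ w x) : ∑ x, mw1Step η γ g w x ≤ (1 + γ) * ∑ x, w x := by
  have hexp : ∑ x, w x * exp (-(η * g x)) ≤ ∑ x, w x := sum_le_sum fun x _ =>
    mul_le_of_le_one_right (hw x) (exp_le_one_iff.mpr (by nlinarith [hg x]))
  rw [sum_mw1Step]
  linarith

lemma mul_sum_mw1Step_le [Nonempty ι] (hη : 0 ≤ η) (hγ : 0 ≤ γ) (hg : ∀ x, 0 ≤ g x)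
    (hw : ∀ x, 0 ≤ w x) (x : ι) :
    γ * ∑ y, mw1Step η γ g w y ≤ Fintype.card ι * (1 + γ) * mw1Step η γ g w x := by
  have hN : (0 : ℝ) < Fintype.card ι := Nat.cast_pos.mpr Fintype.card_pos
  calc γ * ∑ y, mw1Step η γ g w y ≤ γ * ((1 + γ) * ∑ y, w y) :=
        mul_le_mul_of_nonneg_left (sum_mw1Step_le_one_add_mul hη hg hw) hγ
    _ = Fintype.card ι * (1 + γ) * (γ / Fintype.card ι * ∑ y, w y) := by field_simp
    _ ≤ Fintype.card ι * (1 + γ) * mw1Step η γ g w x := by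
      gcongr
      exact mix_le_mw1Step hw x

lemma log_sum_mw1Step_le [Nonempty ι] (hη : 0 ≤ η) (hγ : 0 ≤ γ) (hg : ∀ x, 0 ≤ g x)
    (hw : ∀ x, 0 < w x) :
    log (∑ x, mw1Step η γ g w x) ≤ log (∑ x, w x)
      + (γ - η * ∑ x, w x / (∑ y, w y) * g x + η ^ 2 * ∑ x, w x / (∑ y, w y) * g x ^ 2) := by
  set W := ∑ y, w y
  have hW : 0 < W := sum_pos (fun x _ => hw x) univ_nonempty
  have weighted_mean (h : ι → ℝ) : W * ∑ x, w x / W * h x = ∑ x, w x * h x := by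
    rw [mul_sum]
    exact sum_congr rfl fun x _ => by field_simp
  set u := γ - η * ∑ x, w x / W * g x + η ^ 2 * ∑ x, w x / W * g x ^ 2
  have hexp : ∑ x, w x * exp (-(η * g x)) ≤ W * (1 - γ + u) :=
    calc ∑ x, w x * exp (-(η * g x)) ≤ ∑ x, w x * (1 - η * g x + (η * g x) ^ 2) :=
          sum_le_sum fun x _ => mul_le_mul_of_nonneg_left
            (exp_neg_le_one_sub_add_sq (mul_nonneg hη (hg x))) (hw x).le
      _ = W - η * ∑ x, w x * g x + η ^ 2 * ∑ x, w x * g x ^ 2 := by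
        simp only [W, mul_sum, ← sum_sub_distrib, ← sum_add_distrib]
        exact sum_congr rfl fun x _ => by ring
      _ = W * (1 - γ + u) := by
        simp only [u]
        rw [← weighted_mean g, ← weighted_mean (g · ^ 2)]
        ring
  have hsum : ∑ x, mw1Step η γ g w x ≤ W * exp u := by
    rw [sum_mw1Step]
    nlinarith [add_one_le_exp u]
  calc log (∑ x, mw1Step η γ g w x) ≤ log (W * exp u) :=
        log_le_log (sum_pos (fun x _ => mw1Step_pos hγ hw x) univ_nonempty) hsum
    _ = log W + u := by rw [log_mul hW.ne' (exp_ne_zero u), log_exp]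

end Step

section Rounds

variable {ι : Type*} [Fintype ι] {η γ : ℝ} {f w : ℕ → ι → ℝ}

lemma mw1_pos (hγ : 0 ≤ γ) (hw1 : ∀ x, 0 < w 1 x)
    (hrec : ∀ t, 1 ≤ t → w (t + 1) = mw1Step η γ (f t) (w t)) :
    ∀ t, 1 ≤ t → ∀ x, 0 < w t x := by
  intro t ht
  induction t, ht using Nat.le_induction with
  | base => exact hw1
  | succ t ht ih => rw [hrec t ht]; exact mw1Step_pos hγ ih

lemma mul_sum_mw1_le [Nonempty ι] (hη : 0 ≤ η) (hγ : 0 ≤ γ) (hf : ∀ t x, 0 ≤ f t x)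
    (hw1 : ∀ x, w 1 x = 1) (hrec : ∀ t, 1 ≤ t → w (t + 1) = mw1Step η γ (f t) (w t))
    {t : ℕ} (ht : 1 ≤ t) (x : ι) :
    γ * ∑ y, w t y ≤ Fintype.card ι * (1 + γ) * w t x := by
  obtain rfl | ⟨s, hs, rfl⟩ : t = 1 ∨ ∃ s, 1 ≤ s ∧ t = s + 1 :=
    (eq_or_lt_of_le ht).imp Eq.symm fun h => ⟨t - 1, by omega, by omega⟩
  · simp only [hw1, sum_const, card_univ, nsmul_eq_mul, mul_one]
    nlinarith [(Nat.cast_nonneg (Fintype.card ι) : (0 : ℝ) ≤ _)]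
  · have hpos := mw1_pos hγ (fun x => (hw1 x).symm ▸ one_pos) hrec s hs
    rw [hrec s hs]
    exact mul_sum_mw1Step_le hη hγ (hf s) (fun y => (hpos y).le) x

lemma log_sum_mw1_le [Nonempty ι] (hη : 0 ≤ η) (hγ : 0 ≤ γ) (hf : ∀ t x, 0 ≤ f t x)
    (hpos : ∀ t, 1 ≤ t → ∀ x, 0 < w t x)
    (hrec : ∀ t, 1 ≤ t → w (t + 1) = mw1Step η γ (f t) (w t)) {a b : ℕ} (ha : 1 ≤ a)
    (hab : a ≤ b) :
    log (∑ x, w (b + 1) x) - log (∑ x, w a x) ≤ ∑ t ∈ Icc a b,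
      (γ - η * ∑ x, w t x / (∑ y, w t y) * f t x
        + η ^ 2 * ∑ x, w t x / (∑ y, w t y) * f t x ^ 2) :=
  sub_le_sum_of_succ_sub_le (g := fun t => log (∑ x, w t x)) hab fun t ht => by
    have ht1 : 1 ≤ t := ha.trans (mem_Icc.mp ht).1
    rw [hrec t ht1, sub_le_iff_le_add']
    exact log_sum_mw1Step_le hη hγ (hf t) (hpos t ht1)

lemma log_mw1_sub_le (hγ : 0 ≤ γ) (hpos : ∀ t, 1 ≤ t → ∀ x, 0 < w t x)
    (hrec : ∀ t, 1 ≤ t → w (t + 1) = mw1Step η γ (f t) (w t)) {a b : ℕ} (ha : 1 ≤ a)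
    (hab : a ≤ b) (x : ι) :
    log (w a x) - log (w (b + 1) x) ≤ η * ∑ t ∈ Icc a b, f t x := by
  have key := sub_le_sum_of_succ_sub_le (g := fun t => -log (w t x))
    (h := fun t => η * f t x) hab fun t ht => by
      have ht1 : 1 ≤ t := ha.trans (mem_Icc.mp ht).1
      have hstep : log (w t x * exp (-(η * f t x))) ≤ log (w (t + 1) x) := by
        rw [hrec t ht1]
        exact log_le_log (by have := hpos t ht1 x; positivity)
          (mul_exp_le_mw1Step hγ (fun y => (hpos t ht1 y).le) x)
      rw [log_mul (hpos t ht1 x).ne' (exp_ne_zero _), log_exp] at hstep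
      linarith
  rw [mul_sum]
  linarith

theorem mw1_regret_le [Nonempty ι] (hη : 0 < η) (hγ : 0 < γ) (hf : ∀ t x, 0 ≤ f t x)
    (hw1 : ∀ x, w 1 x = 1) (hrec : ∀ t, 1 ≤ t → w (t + 1) = mw1Step η γ (f t) (w t))
    {a b : ℕ} (ha : 1 ≤ a) (hab : a ≤ b) (x : ι) :
    ∑ t ∈ Icc a b, ∑ y, w t y / (∑ z, w t z) * f t y - ∑ t ∈ Icc a b, f t x
      ≤ (log (Fintype.card ι * (1 + γ) / γ) + #(Icc a b) * γ) / η
        + η * ∑ t ∈ Icc a b, ∑ y, w t y / (∑ z, w t z) * f t y ^ 2 := by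
  have hpos := mw1_pos hγ.le (fun x => (hw1 x).symm ▸ one_pos) hrec
  have hWpos : 0 < ∑ y, w a y := sum_pos (fun y _ => hpos a ha y) univ_nonempty
  have hC : 0 < Fintype.card ι * (1 + γ) / γ := by
    have : (0 : ℝ) < Fintype.card ι := Nat.cast_pos.mpr Fintype.card_pos
    positivity
  have hinit : log (∑ y, w a y) - log (Fintype.card ι * (1 + γ) / γ) ≤ log (w a x) := by
    rw [← log_div hWpos.ne' hC.ne']
    refine log_le_log (div_pos hWpos hC) ?_
    rw [div_le_iff₀ hC, mul_div_assoc', le_div_iff₀ hγ]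
    linarith [mul_sum_mw1_le hη.le hγ.le hf hw1 hrec ha x]
  have hlast : log (w (b + 1) x) ≤ log (∑ y, w (b + 1) y) :=
    log_le_log (hpos _ (by omega) x)
      (single_le_sum (fun y _ => (hpos _ (by omega) y).le) (mem_univ x))
  have hdown := log_mw1_sub_le hγ.le hpos hrec ha hab x
  have hup := log_sum_mw1_le hη.le hγ.le hf hpos hrec ha hab
  rw [sum_add_distrib, sum_sub_distrib, sum_const, nsmul_eq_mul, ← mul_sum, ← mul_sum] at hup
  rw [← sub_le_iff_le_add, le_div_iff₀ hη]
  linarith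

end Rounds

theorem mw1_regret_second_moment_general
    (N T : ℕ) (hN : 1 ≤ N) (hNT : 3 ≤ N * T)
    (η : ℝ) (hη : 0 < η)
    (f : ℕ → Fin N → ℝ) (hf : ∀ t x, 0 ≤ f t x)
    (w : ℕ → Fin N → ℝ)
    (hw1 : ∀ x, w 1 x = 1)
    (hwrec : ∀ t, 1 ≤ t → ∀ x,
      w (t + 1) x = w t x * Real.exp (-(η * f t x))
        + ((1 / (T : ℝ)) / (N : ℝ)) * ∑ y, w t y)
    (q : ℕ → Fin N → ℝ)
    (hq : ∀ t x, q t x = w t x / ∑ y, w t y)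
    (t0 t1 : ℕ) (ht0 : 1 ≤ t0) (ht01 : t0 ≤ t1) (hlen : t1 - t0 + 1 ≤ T) :
    (∑ t ∈ Icc t0 t1, ∑ x, q t x * f t x)
      - (univ.inf' (univ_nonempty_iff.mpr ⟨⟨0, hN⟩⟩)
          fun x => ∑ t ∈ Icc t0 t1, f t x)
    ≤ 2 * Real.log ((N : ℝ) * (T : ℝ)) / η
      + η * ∑ t ∈ Icc t0 t1, ∑ x, q t x * (f t x) ^ 2 := by
  have : Nonempty (Fin N) := ⟨⟨0, hN⟩⟩
  have hrec : ∀ t, 1 ≤ t → w (t + 1) = mw1Step η (1 / T) (f t) (w t) := fun t ht =>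
    funext fun x => by rw [hwrec t ht x, mw1Step, Fintype.card_fin]
  obtain ⟨x, -, hx⟩ := exists_mem_eq_inf' (univ_nonempty_iff.mpr ⟨⟨0, hN⟩⟩)
    fun x => ∑ t ∈ Icc t0 t1, f t x
  simp only [hx, hq]
  have hlog : 1 ≤ log ((N : ℝ) * T) := one_le_log_of_three_le (mod_cast hNT)
  have hcard : (#(Icc t0 t1) : ℝ) ≤ T := mod_cast (Nat.card_Icc t0 t1).trans_le (by omega)
  rcases le_or_gt T 8 with hT | hT
  · have hpos : ∀ t ∈ Icc t0 t1, ∀ y, 0 < w t y := fun t ht =>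
      mw1_pos (by positivity) (fun x => (hw1 x).symm ▸ one_pos) hrec t
        (ht0.trans (mem_Icc.mp ht).1)
    refine (sum_sum_mul_sub_sum_le hη (fun t ht y => ?_) (fun t ht => ?_)
      fun t _ => hf t x).trans ?_
    · exact div_nonneg (hpos t ht y).le (sum_nonneg fun z _ => (hpos t ht z).le)
    · rw [← sum_div, div_self (sum_pos (fun z _ => hpos t ht z) univ_nonempty).ne']
    gcongr
    have : (T : ℝ) ≤ 8 := mod_cast hT
    linarith
  · have hT0 : (0 : ℝ) < T := by positivity
    refine (mw1_regret_le hη (by positivity) hf hw1 hrec ht0 ht01 x).trans ?_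
    gcongr
    have hT9 : (9 : ℝ) ≤ T := mod_cast hT
    have hN1 : (1 : ℝ) ≤ N := mod_cast hN
    calc log (Fintype.card (Fin N) * (1 + 1 / T) / (1 / T)) + #(Icc t0 t1) * (1 / T)
        ≤ log (N * (T + 1)) + 1 := by
          have hratio : (N : ℝ) * (1 + 1 / T) / (1 / T) = N * (T + 1) := by field_simp
          rw [Fintype.card_fin, hratio, mul_one_div]
          gcongr
          exact (div_le_one hT0).mpr hcard
      _ ≤ 2 * log (N * T) := log_mul_add_one_add_one_le_two_mul_log hN1 hT9

/-- Regret bound (with second-moment term) for the MW¹ recursion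
with mixing parameter γ = 1/T, on nonnegative losses. -/
theorem mw1_regret_second_moment
    (N T : ℕ) (hN : 1 ≤ N) (hT : 1 ≤ T) (hNT : 3 ≤ N * T)
    (η : ℝ) (hη : 0 < η)
    (f : ℕ → Fin N → ℝ) (hf : ∀ t x, 0 ≤ f t x)
    (w : ℕ → Fin N → ℝ)
    (hw1 : ∀ x, w 1 x = 1)
    (hwrec : ∀ t, 1 ≤ t → ∀ x,
      w (t + 1) x = w t x * Real.exp (-(η * f t x))
        + ((1 / (T : ℝ)) / (N : ℝ)) * ∑ y, w t y)
    (q : ℕ → Fin N → ℝ)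
    (hq : ∀ t x, q t x = w t x / ∑ y, w t y)
    (t0 t1 : ℕ) (ht0 : 1 ≤ t0) (ht01 : t0 ≤ t1) (hlen : t1 - t0 + 1 ≤ T) :
    (∑ t ∈ Icc t0 t1, ∑ x, q t x * f t x)
      - (univ.inf' (univ_nonempty_iff.mpr ⟨⟨0, hN⟩⟩)
          fun x => ∑ t ∈ Icc t0 t1, f t x)
    ≤ 2 * Real.log ((N : ℝ) * (T : ℝ)) / η
      + η * ∑ t ∈ Icc t0 t1, ∑ x, q t x * (f t x) ^ 2 :=
  mw1_regret_second_moment_general N T hN hNT η hη f hf w hw1 hwrec q hq t0 t1 ht0 ht01 hlen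
end

section
/- Fix integers N ≥ 1 and T ≥ 1 with N·T ≥ 3, and a learning rate η > 0. Let f_1, f_2, … : {1,…,N} → [0,1] be loss functions taking values in [0,1] and run the MW¹ recursion with mixing parameter γ = 1/T. Then for any rounds t0 ≤ t1 with t1 − t0 + 1 ≤ T, the distributions q_t satisfy: Σ_{t=t0}^{t1} Σ_{x=1}^{N} q_t(x)·f_t(x) − min_{x∈{1,…,N}} Σ_{t=t0}^{t1} f_t(x) ≤ (2·log(N·T))/η + η·T. -/
/-!
The potential `log W_t` drops in round `t` by at least `η ⟨q_t, f_t⟩ - η²/2 - γ`, since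
`exp (-z) ≤ 1 - z + z²/2` for `z ≥ 0` and the mixing adds exactly `γ W_t`. On the other hand
`w_t(x)` only loses the factor `exp (-η f_t(x))` per round, and the mixing guarantees
`q_{t₀}(x) ≥ γ / (N (1 + γ))` at the start of any window. Comparing both ends of the window gives
`η · regret ≤ log (N/γ) + γ + m (η²/2 + γ)` over `m` rounds; with `γ = 1/T` this is the claim unless
`η T < √2`, where the trivial bound `regret ≤ T ≤ 2 log (N T) / η` suffices.
-/

open Finset Real

theorem Real.exp_neg_le_one_sub_add_sq_div_two {z : ℝ} (hz : 0 ≤ z) :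
    exp (-z) ≤ 1 - z + z ^ 2 / 2 := by
  have hpos : 0 < 1 - z + z ^ 2 / 2 := by nlinarith [sq_nonneg (z - 1)]
  -- `(1 - z + z²/2) (1 + z + z²/2) = 1 + z⁴/4`
  rw [exp_neg, inv_le_iff_one_le_mul₀ (exp_pos z)]
  nlinarith [mul_le_mul_of_nonneg_left (quadratic_le_exp_of_nonneg hz) hpos.le, pow_nonneg hz 4]

theorem Finset.sum_div_sum_mul_le_one {ι : Type*} (s : Finset ι) {w g : ι → ℝ}
    (hw : ∀ x ∈ s, 0 ≤ w x) (hg : ∀ x ∈ s, g x ≤ 1) :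
    ∑ x ∈ s, w x / (∑ y ∈ s, w y) * g x ≤ 1 := by
  simp_rw [div_mul_eq_mul_div, ← sum_div]
  exact div_le_one_of_le₀ (sum_le_sum fun x hx => mul_le_of_le_one_right (hw x hx) (hg x hx))
    (sum_nonneg hw)

theorem le_two_mul_div_add_mul_of_potential_bound {η T L m R : ℝ} (hη : 0 < η) (hT : 0 < T)
    (hL : 1 ≤ L) (hm : m ≤ T) (hpot : η * R ≤ L + 1 / T + m * (η ^ 2 / 2 + 1 / T))
    (htriv : R ≤ m) :
    R ≤ 2 * L / η + η * T := by
  rw [div_add' _ _ _ hη.ne', le_div_iff₀ hη]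
  have hmT : m * (η ^ 2 / 2 + 1 / T) ≤ T * η ^ 2 / 2 + 1 := by
    calc m * (η ^ 2 / 2 + 1 / T) ≤ T * (η ^ 2 / 2 + 1 / T) := by gcongr
      _ = T * η ^ 2 / 2 + 1 := by field_simp
  by_cases hlarge : 1 + 1 / T ≤ L + η ^ 2 * T / 2
  · nlinarith
  · have hsq : η ^ 2 * T / 2 * T < 1 := by
      rw [← lt_div_iff₀ hT]
      linarith
    have hηT : η * T < 2 := by nlinarith
    nlinarith [mul_le_mul_of_nonneg_left (htriv.trans hm) hη.le]

def IsMW1 {ι : Type*} [Fintype ι] (η γ : ℝ) (f w : ℕ → ι → ℝ) : Prop :=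
  ∀ t, 1 ≤ t → ∀ x,
    w (t + 1) x = w t x * exp (-(η * f t x)) + γ / Fintype.card ι * ∑ y, w t y

namespace IsMW1

variable {ι : Type*} [Fintype ι] {η γ : ℝ} {f w : ℕ → ι → ℝ}

theorem weight_pos (h : IsMW1 η γ f w) (hγ : 0 ≤ γ) (hw1 : ∀ x, 0 < w 1 x) :
    ∀ t, 1 ≤ t → ∀ x, 0 < w t x := by
  intro t ht
  induction t, ht using Nat.le_induction with
  | base => exact hw1
  | succ t ht ih =>
    intro x
    rw [h t ht x]
    exact add_pos_of_pos_of_nonneg (mul_pos (ih x) (exp_pos _))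
      (mul_nonneg (by positivity) (sum_nonneg fun y _ => (ih y).le))

theorem sum_succ [Nonempty ι] (h : IsMW1 η γ f w) {t : ℕ} (ht : 1 ≤ t) :
    ∑ x, w (t + 1) x = ∑ x, w t x * exp (-(η * f t x)) + γ * ∑ x, w t x := by
  have hN : (Fintype.card ι : ℝ) ≠ 0 := Nat.cast_ne_zero.2 Fintype.card_ne_zero
  rw [sum_congr rfl fun x _ => h t ht x, sum_add_distrib, sum_const, card_univ, nsmul_eq_mul]
  field_simp

theorem log_sum_succ_sub_le [Nonempty ι] (h : IsMW1 η γ f w) (hη : 0 ≤ η)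
    (hf : ∀ t x, f t x ∈ Set.Icc (0 : ℝ) 1) (hw : ∀ t, 1 ≤ t → ∀ x, 0 < w t x)
    {t : ℕ} (ht : 1 ≤ t) :
    log (∑ x, w (t + 1) x) - log (∑ x, w t x)
      ≤ η ^ 2 / 2 + γ - η * ∑ x, w t x / (∑ y, w t y) * f t x := by
  set W := ∑ y, w t y
  have hW : 0 < W := sum_pos (fun y _ => hw t ht y) univ_nonempty
  have hW' : 0 < ∑ x, w (t + 1) x := sum_pos (fun y _ => hw (t + 1) (by omega) y) univ_nonempty
  have hexp (x : ι) : exp (-(η * f t x)) ≤ 1 - η * f t x + η ^ 2 / 2 := by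
    obtain ⟨hf0, hf1⟩ := hf t x
    have := exp_neg_le_one_sub_add_sq_div_two (mul_nonneg hη hf0)
    nlinarith [mul_le_mul_of_nonneg_left (mul_le_of_le_one_right hf0 hf1) (sq_nonneg η)]
  have hsum : ∑ x, w (t + 1) x ≤ W + η ^ 2 / 2 * W + γ * W - η * ∑ x, w t x * f t x := by
    calc ∑ x, w (t + 1) x
        ≤ ∑ x, w t x * (1 - η * f t x + η ^ 2 / 2) + γ * W := by
          rw [h.sum_succ ht]
          gcongr with x
          · exact (hw t ht x).le
          · exact hexp x
      _ = W + η ^ 2 / 2 * W + γ * W - η * ∑ x, w t x * f t x := by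
          rw [sum_congr rfl fun x _ => (by ring : w t x * (1 - η * f t x + η ^ 2 / 2)
            = w t x + η ^ 2 / 2 * w t x - η * (w t x * f t x)),
            sum_sub_distrib, sum_add_distrib, ← mul_sum, ← mul_sum]
          ring
  have hqf : ∑ x, w t x / W * f t x = (∑ x, w t x * f t x) / W := by
    rw [sum_div]
    exact sum_congr rfl fun x _ => div_mul_eq_mul_div _ _ _
  rw [← log_div hW'.ne' hW.ne', hqf]
  refine (log_le_sub_one_of_pos (div_pos hW' hW)).trans ?_
  rw [div_sub_one hW.ne', div_le_iff₀ hW]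
  field_simp
  linarith

theorem log_sum_sub_le [Nonempty ι] (h : IsMW1 η γ f w) (hη : 0 ≤ η)
    (hf : ∀ t x, f t x ∈ Set.Icc (0 : ℝ) 1) (hw : ∀ t, 1 ≤ t → ∀ x, 0 < w t x)
    {t₀ t : ℕ} (ht₀ : 1 ≤ t₀) (hle : t₀ ≤ t) :
    log (∑ x, w t x) - log (∑ x, w t₀ x)
      ≤ ∑ s ∈ Ico t₀ t, (η ^ 2 / 2 + γ - η * ∑ x, w s x / (∑ y, w s y) * f s x) := by
  rw [← sum_Ico_sub (fun s => log (∑ x, w s x)) hle]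
  exact sum_le_sum fun s hs => h.log_sum_succ_sub_le hη hf hw (ht₀.trans (mem_Ico.1 hs).1)

theorem neg_mul_sum_le_log_weight_sub (h : IsMW1 η γ f w) (hγ : 0 ≤ γ)
    (hw : ∀ t, 1 ≤ t → ∀ x, 0 < w t x) {t₀ t : ℕ} (ht₀ : 1 ≤ t₀) (hle : t₀ ≤ t) (x : ι) :
    -(η * ∑ s ∈ Ico t₀ t, f s x) ≤ log (w t x) - log (w t₀ x) := by
  rw [← sum_Ico_sub (fun s => log (w s x)) hle, mul_sum, ← sum_neg_distrib]
  refine sum_le_sum fun s hs => ?_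
  have hs : 1 ≤ s := ht₀.trans (mem_Ico.1 hs).1
  have hstep : w s x * exp (-(η * f s x)) ≤ w (s + 1) x := by
    rw [h s hs x]
    exact le_add_of_nonneg_right
      (mul_nonneg (by positivity) (sum_nonneg fun y _ => (hw s hs y).le))
  have := log_le_log (mul_pos (hw s hs x) (exp_pos _)) hstep
  rw [log_mul (hw s hs x).ne' (exp_pos _).ne', log_exp] at this
  linarith

theorem div_mul_one_add_le_prob [Nonempty ι] (h : IsMW1 η γ f w) (hη : 0 ≤ η) (hγ : 0 ≤ γ)
    (hf : ∀ t x, 0 ≤ f t x) (hw1 : ∀ x, w 1 x = 1) {t : ℕ} (ht : 1 ≤ t) (x : ι) :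
    γ / (Fintype.card ι * (1 + γ)) ≤ w t x / ∑ y, w t y := by
  have hN : (0 : ℝ) < Fintype.card ι := Nat.cast_pos.2 Fintype.card_pos
  have hw := h.weight_pos hγ fun x => (hw1 x).symm ▸ one_pos
  obtain rfl | ⟨s, hs, rfl⟩ : t = 1 ∨ ∃ s, 1 ≤ s ∧ t = s + 1 :=
    (eq_or_lt_of_le ht).elim (fun h => .inl h.symm) fun h => .inr ⟨t - 1, by omega, by omega⟩
  · simp only [hw1, sum_const, card_univ, nsmul_eq_mul, mul_one]
    rw [div_le_div_iff₀ (by positivity) hN]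
    nlinarith
  · have hWs : 0 < ∑ y, w s y := sum_pos (fun y _ => hw s hs y) univ_nonempty
    have hnum : γ / Fintype.card ι * ∑ y, w s y ≤ w (s + 1) x := by
      rw [h s hs x]
      exact le_add_of_nonneg_left (mul_nonneg (hw s hs x).le (exp_pos _).le)
    have hden : ∑ y, w (s + 1) y ≤ (1 + γ) * ∑ y, w s y := by
      rw [h.sum_succ hs, add_mul, one_mul]
      gcongr ?_ + _
      exact sum_le_sum fun y _ => mul_le_of_le_one_right (hw s hs y).le
        (exp_le_one_iff.2 (neg_nonpos.2 (mul_nonneg hη (hf s y))))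
    calc γ / (Fintype.card ι * (1 + γ))
        = (γ / Fintype.card ι * ∑ y, w s y) / ((1 + γ) * ∑ y, w s y) := by
          rw [mul_div_mul_right _ _ hWs.ne', div_div]
      _ ≤ w (s + 1) x / ∑ y, w (s + 1) y :=
          div_le_div₀ (hw (s + 1) (by omega) x).le hnum
            (sum_pos (fun y _ => hw (s + 1) (by omega) y) univ_nonempty) hden

theorem neg_log_prob_le [Nonempty ι] (h : IsMW1 η γ f w) (hη : 0 ≤ η) (hγ : 0 < γ)
    (hf : ∀ t x, 0 ≤ f t x) (hw1 : ∀ x, w 1 x = 1) {t : ℕ} (ht : 1 ≤ t) (x : ι) :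
    -log (w t x / ∑ y, w t y) ≤ log (Fintype.card ι / γ) + γ := by
  have hN : (0 : ℝ) < Fintype.card ι := Nat.cast_pos.2 Fintype.card_pos
  have hlow := h.div_mul_one_add_le_prob hη hγ.le hf hw1 ht x
  have hlog := log_le_log (by positivity) hlow
  rw [div_mul_eq_div_div_swap, log_div (by positivity) hN.ne', log_div hγ.ne' (by positivity)]
    at hlog
  rw [log_div hN.ne' hγ.ne']
  have := log_le_sub_one_of_pos (show 0 < 1 + γ by positivity)
  linarith

theorem regret_le [Nonempty ι] (h : IsMW1 η γ f w) (hη : 0 ≤ η) (hγ : 0 < γ)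
    (hf : ∀ t x, f t x ∈ Set.Icc (0 : ℝ) 1) (hw1 : ∀ x, w 1 x = 1)
    {t₀ t₁ : ℕ} (ht₀ : 1 ≤ t₀) (ht₀₁ : t₀ ≤ t₁) (x : ι) :
    η * (∑ t ∈ Icc t₀ t₁, ∑ y, w t y / (∑ z, w t z) * f t y - ∑ t ∈ Icc t₀ t₁, f t x)
      ≤ log (Fintype.card ι / γ) + γ + #(Icc t₀ t₁) * (η ^ 2 / 2 + γ) := by
  have hw := h.weight_pos hγ.le fun x => (hw1 x).symm ▸ one_pos
  have hle : t₀ ≤ t₁ + 1 := by omega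
  have hpot := h.log_sum_sub_le hη hf hw ht₀ hle
  have hloss := h.neg_mul_sum_le_log_weight_sub hγ.le hw ht₀ hle x
  have hinit := h.neg_log_prob_le hη hγ (fun t x => (hf t x).1) hw1 ht₀ x
  have hwx : log (w (t₁ + 1) x) ≤ log (∑ y, w (t₁ + 1) y) :=
    log_le_log (hw _ (by omega) x)
      (single_le_sum (fun y _ => (hw _ (by omega) y).le) (mem_univ x))
  rw [log_div (hw t₀ ht₀ x).ne' (sum_pos (fun y _ => hw t₀ ht₀ y) univ_nonempty).ne'] at hinit
  rw [sum_sub_distrib, sum_const, nsmul_eq_mul, ← mul_sum] at hpot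
  rw [← Ico_add_one_right_eq_Icc, mul_sub]
  linarith

end IsMW1

/-- Regret bound for the MW¹ recursion with mixing parameter
γ = 1/T, on losses in [0,1]: on any interval of length at most T the expected
regret is at most 2·log(N·T)/η + η·T. -/
theorem mw1_regret_bound
    (N T : ℕ) (hN : 1 ≤ N) (hT : 1 ≤ T) (hNT : 3 ≤ N * T)
    (η : ℝ) (hη : 0 < η)
    (f : ℕ → Fin N → ℝ) (hf : ∀ t x, f t x ∈ Set.Icc (0 : ℝ) 1)
    (w : ℕ → Fin N → ℝ)
    (hw1 : ∀ x, w 1 x = 1)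
    (hwrec : ∀ t, 1 ≤ t → ∀ x,
      w (t + 1) x = w t x * Real.exp (-(η * f t x))
        + ((1 / (T : ℝ)) / (N : ℝ)) * ∑ y, w t y)
    (q : ℕ → Fin N → ℝ)
    (hq : ∀ t x, q t x = w t x / ∑ y, w t y)
    (t0 t1 : ℕ) (ht0 : 1 ≤ t0) (ht01 : t0 ≤ t1) (hlen : t1 - t0 + 1 ≤ T) :
    (∑ t ∈ Icc t0 t1, ∑ x, q t x * f t x)
      - (univ.inf' (univ_nonempty_iff.mpr ⟨⟨0, hN⟩⟩)
          fun x => ∑ t ∈ Icc t0 t1, f t x)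
    ≤ 2 * Real.log ((N : ℝ) * (T : ℝ)) / η + η * (T : ℝ) := by
  obtain rfl : q = fun t x => w t x / ∑ y, w t y := funext₂ hq
  have : Nonempty (Fin N) := ⟨⟨0, hN⟩⟩
  have hTpos : (0 : ℝ) < T := Nat.cast_pos.2 hT
  have hmw : IsMW1 η (1 / T) f w := fun t ht x => by rw [hwrec t ht x, Fintype.card_fin]
  have hw := hmw.weight_pos (by positivity) fun x => (hw1 x).symm ▸ one_pos
  have hL : 1 ≤ log (N * T) := by
    have : (3 : ℝ) ≤ N * T := by exact_mod_cast hNT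
    rw [le_log_iff_exp_le (by positivity)]
    linarith [exp_one_lt_d9]
  have hlen' : (#(Icc t0 t1) : ℝ) ≤ T := by
    rw [Nat.card_Icc]
    exact_mod_cast (by omega : t1 + 1 - t0 ≤ T)
  refine sub_le_comm.1 (le_inf' _ _ fun x _ => sub_le_comm.1 ?_)
  refine le_two_mul_div_add_mul_of_potential_bound hη hTpos hL hlen' ?_ ?_
  · have := hmw.regret_le hη.le (by positivity) hf hw1 ht0 ht01 x
    rwa [Fintype.card_fin, div_div_eq_mul_div, div_one] at this
  · have hexp : ∑ t ∈ Icc t0 t1, ∑ y, w t y / (∑ z, w t z) * f t y ≤ #(Icc t0 t1) := by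
      simpa using sum_le_card_nsmul _ _ 1 fun t ht => sum_div_sum_mul_le_one univ
        (fun y _ => (hw t (ht0.trans (mem_Icc.1 ht).1) y).le) fun y _ => (hf t y).2
    linarith [sum_nonneg fun t (_ : t ∈ Icc t0 t1) => (hf t x).1]
end

section
/- Let d ≥ 1, N = 2^d, and let f : {0,1}^d → ℕ be globally consistent with unique local maximum v*. Then the minimax value of the zero-sum game with matrix G^f equals λ(f(v*)); that is, min_{p∈Δ_N} max_{q∈Δ_N} pᵀ G^f q = λ(f(v*)), which is 1/4 if f(v*) is even and 3/4 if f(v*) is odd. -/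
open Finset

/-- A vertex `v` of the hypercube is a local maximum of `f` if `f v ≥ f u`
for every vertex `u` at Hamming distance 1 from `v`. -/
def IsCubeLocalMax {d : ℕ} (f : (Fin d → Bool) → ℕ) (v : Fin d → Bool) : Prop :=
  ∀ u : Fin d → Bool, hammingDist u v = 1 → f u ≤ f v

/-- λ(k) = 1/4 if k is even, 3/4 if k is odd. -/
noncomputable def lamVal (k : ℕ) : ℝ := if Even k then 1 / 4 else 3 / 4

open Classical in
/-- The game matrix G^f built from f: entry (i,j) equals λ(f i) if both i and j
are local maxima of f; otherwise 0 if f i ≥ f j and 1 if f i < f j. -/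
noncomputable def gameMatrix {d : ℕ} (f : (Fin d → Bool) → ℕ) :
    (Fin d → Bool) → (Fin d → Bool) → ℝ := fun i j =>
  if IsCubeLocalMax f i ∧ IsCubeLocalMax f j then lamVal (f i)
  else if f j ≤ f i then 0 else 1

lemma lamVal_nonneg (k : ℕ) : 0 ≤ lamVal k := by
  unfold lamVal; split <;> norm_num

lemma lamVal_le_one (k : ℕ) : lamVal k ≤ 1 := by
  unfold lamVal; split <;> norm_num

lemma gameMatrix_nonneg {d : ℕ} (f : (Fin d → Bool) → ℕ) (i j : Fin d → Bool) :
    0 ≤ gameMatrix f i j := by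
  unfold gameMatrix
  split
  · exact lamVal_nonneg _
  · split <;> norm_num

lemma gameMatrix_le_one {d : ℕ} (f : (Fin d → Bool) → ℕ) (i j : Fin d → Bool) :
    gameMatrix f i j ≤ 1 := by
  unfold gameMatrix
  split
  · exact lamVal_le_one _
  · split <;> norm_num

/-- For a globally consistent `f` with unique local maximum
`v*`, the minimax value of the zero-sum game `G^f` equals λ(f v*), i.e. 1/4 if
f v* is even and 3/4 if f v* is odd. -/
theorem gameMatrix_minimax_value
    (d : ℕ) (hd : 1 ≤ d)
    (f : (Fin d → Bool) → ℕ)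
    (vstar : Fin d → Bool)
    (hv : IsCubeLocalMax f vstar)
    (huniq : ∀ u, IsCubeLocalMax f u → u = vstar) :
    (⨅ p : stdSimplex ℝ (Fin d → Bool), ⨆ q : stdSimplex ℝ (Fin d → Bool),
        ∑ i, ∑ j, p.1 i * gameMatrix f i j * q.1 j)
      = if Even (f vstar) then (1 / 4 : ℝ) else 3 / 4 := by
  classical
  rw [show (if Even (f vstar) then (1 / 4 : ℝ) else 3 / 4) = lamVal (f vstar) from rfl]
  -- v* is a global maximum
  have hglob : ∀ u, f u ≤ f vstar := by
    obtain ⟨m, -, hm⟩ := Finset.exists_max_image (univ : Finset (Fin d → Bool)) f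
      ⟨vstar, mem_univ _⟩
    have hmv : m = vstar := huniq m (fun u _ => hm u (mem_univ _))
    subst hmv
    exact fun u => hm u (mem_univ _)
  have hstrict : ∀ i, i ≠ vstar → f i < f vstar := by
    intro i hi
    by_contra h
    push_neg at h
    exact hi (huniq i (fun u _ => le_trans (hglob u) h))
  have hrow : ∀ j, gameMatrix f vstar j = if j = vstar then lamVal (f vstar) else 0 := by
    intro j
    unfold gameMatrix
    by_cases hj : j = vstar
    · subst hj; simp [hv]
    · rw [if_neg, if_pos (hglob j), if_neg hj]
      rintro ⟨-, hjl⟩; exact hj (huniq j hjl)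
  have hcol : ∀ i, gameMatrix f i vstar = if i = vstar then lamVal (f vstar) else 1 := by
    intro i
    unfold gameMatrix
    by_cases hi : i = vstar
    · subst hi; simp [hv]
    · rw [if_neg, if_neg, if_neg hi]
      · exact not_le.mpr (hstrict i hi)
      · rintro ⟨hil, -⟩; exact hi (huniq i hil)
  -- the Dirac measure at vstar
  set δ : (Fin d → Bool) → ℝ := fun j => if j = vstar then 1 else 0 with hδdef
  have hδmem : δ ∈ stdSimplex ℝ (Fin d → Bool) := by
    constructor
    · intro x; simp only [hδdef]; split <;> norm_num
    · simp [hδdef]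
  haveI : Nonempty (stdSimplex ℝ (Fin d → Bool)) := ⟨⟨δ, hδmem⟩⟩
  have hq_le_one : ∀ q : stdSimplex ℝ (Fin d → Bool), q.1 vstar ≤ 1 := by
    intro q
    calc q.1 vstar ≤ ∑ j, q.1 j :=
          Finset.single_le_sum (fun j _ => q.2.1 j) (mem_univ _)
      _ = 1 := q.2.2
  have hFle : ∀ p q : stdSimplex ℝ (Fin d → Bool),
      ∑ i, ∑ j, p.1 i * gameMatrix f i j * q.1 j ≤ 1 := by
    intro p q
    calc ∑ i, ∑ j, p.1 i * gameMatrix f i j * q.1 j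
        ≤ ∑ i, ∑ j, p.1 i * 1 * q.1 j := by
          refine Finset.sum_le_sum fun i _ => Finset.sum_le_sum fun j _ => ?_
          exact mul_le_mul_of_nonneg_right
            (mul_le_mul_of_nonneg_left (gameMatrix_le_one f i j) (p.2.1 i)) (q.2.1 j)
      _ = 1 := by
          simp only [mul_one]
          rw [← Finset.sum_mul_sum, p.2.2, q.2.2, mul_one]
  have hBdd : ∀ p : stdSimplex ℝ (Fin d → Bool),
      BddAbove (Set.range fun q : stdSimplex ℝ (Fin d → Bool) =>
        ∑ i, ∑ j, p.1 i * gameMatrix f i j * q.1 j) := by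
    intro p
    exact ⟨1, by rintro x ⟨q, rfl⟩; exact hFle p q⟩
  -- value against column vstar
  have hcolval : ∀ p : stdSimplex ℝ (Fin d → Bool),
      ∑ i, ∑ j, p.1 i * gameMatrix f i j * δ j = ∑ i, p.1 i * gameMatrix f i vstar := by
    intro p
    refine Finset.sum_congr rfl fun i _ => ?_
    simp [hδdef, mul_ite, mul_one, mul_zero, Finset.sum_ite_eq']
  have hrowval : ∀ q : stdSimplex ℝ (Fin d → Bool),
      ∑ i, ∑ j, δ i * gameMatrix f i j * q.1 j = lamVal (f vstar) * q.1 vstar := by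
    intro q
    rw [Finset.sum_eq_single vstar]
    · simp only [hδdef, if_pos rfl, one_mul]
      calc ∑ j, gameMatrix f vstar j * q.1 j
          = ∑ j, (if j = vstar then lamVal (f vstar) * q.1 j else 0) := by
            refine Finset.sum_congr rfl fun j _ => ?_
            rw [hrow j]
            split <;> simp
        _ = lamVal (f vstar) * q.1 vstar := by
            rw [Finset.sum_ite_eq' univ vstar (fun j => lamVal (f vstar) * q.1 j),
              if_pos (mem_univ _)]
    · intro i _ hi
      simp [hδdef, hi]
    · intro h; exact absurd (mem_univ vstar) h
  -- lower bound: any p has sup ≥ λ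
  have hlow : ∀ p : stdSimplex ℝ (Fin d → Bool),
      lamVal (f vstar) ≤ ⨆ q : stdSimplex ℝ (Fin d → Bool),
        ∑ i, ∑ j, p.1 i * gameMatrix f i j * q.1 j := by
    intro p
    refine le_trans ?_ (le_ciSup (hBdd p) ⟨δ, hδmem⟩)
    rw [hcolval p]
    have : ∀ i, lamVal (f vstar) ≤ gameMatrix f i vstar := by
      intro i; rw [hcol i]
      split
      · exact le_refl _
      · exact lamVal_le_one _
    calc lamVal (f vstar) = (∑ i, p.1 i) * lamVal (f vstar) := by rw [p.2.2, one_mul]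
      _ = ∑ i, p.1 i * lamVal (f vstar) := Finset.sum_mul _ _ _
      _ ≤ ∑ i, p.1 i * gameMatrix f i vstar :=
          Finset.sum_le_sum fun i _ => mul_le_mul_of_nonneg_left (this i) (p.2.1 i)
  have hsupδ : (⨆ q : stdSimplex ℝ (Fin d → Bool),
      ∑ i, ∑ j, δ i * gameMatrix f i j * q.1 j) = lamVal (f vstar) := by
    apply le_antisymm
    · refine ciSup_le fun q => ?_
      rw [hrowval q]
      calc lamVal (f vstar) * q.1 vstar ≤ lamVal (f vstar) * 1 :=
            mul_le_mul_of_nonneg_left (hq_le_one q) (lamVal_nonneg _)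
        _ = lamVal (f vstar) := mul_one _
    · have := le_ciSup (hBdd ⟨δ, hδmem⟩) (⟨δ, hδmem⟩ : stdSimplex ℝ (Fin d → Bool))
      refine le_trans ?_ this
      rw [hrowval ⟨δ, hδmem⟩]
      simp [hδdef]
  refine le_antisymm (le_trans
    (ciInf_le ⟨lamVal (f vstar), by rintro x ⟨p, rfl⟩; exact hlow p⟩
      (⟨δ, hδmem⟩ : stdSimplex ℝ (Fin d → Bool)))
    (le_of_eq hsupδ)) (le_ciInf hlow)
end

section
/- Let d ≥ 1, N = 2^d, and let f : {0,1}^d → ℕ be globally consistent with unique local maximum v*. Then the pure strategy profile (v*, v*) is an equilibrium of the zero-sum game G^f: for every row index i ∈ {1,…,N}, G^f_{v*,v*} ≤ G^f_{i,v*}, and for every column index j ∈ {1,…,N}, G^f_{v*,j} ≤ G^f_{v*,v*}. -/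
open Finset

/-- For a globally consistent `f` with unique local maximum
`v*`, the pure strategy profile (v*, v*) is an equilibrium of the zero-sum
game G^f: the row player (minimizer) cannot gain by deviating from v*, and
neither can the column player (maximizer). -/
theorem gameMatrix_pure_equilibrium
    (d : ℕ) (hd : 1 ≤ d)
    (f : (Fin d → Bool) → ℕ)
    (vstar : Fin d → Bool)
    (hv : IsCubeLocalMax f vstar)
    (huniq : ∀ u, IsCubeLocalMax f u → u = vstar) :
    (∀ i : Fin d → Bool, gameMatrix f vstar vstar ≤ gameMatrix f i vstar) ∧
    (∀ j : Fin d → Bool, gameMatrix f vstar j ≤ gameMatrix f vstar vstar) := by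

  classical
  -- the global max point of f is a local max, hence vstar; so f is maximized at vstar
  have hglob : ∀ i, f i ≤ f vstar := by
    obtain ⟨m, -, hm⟩ := Finset.exists_max_image (Finset.univ : Finset (Fin d → Bool)) f
      ⟨vstar, Finset.mem_univ _⟩
    have hmlm : IsCubeLocalMax f m := fun u _ => hm u (Finset.mem_univ u)
    have := huniq m hmlm
    intro i
    simpa [this] using hm i (Finset.mem_univ i)
  have hlam1 : lamVal (f vstar) ≤ 1 := by
    unfold lamVal; split <;> norm_num
  have hlam0 : 0 ≤ lamVal (f vstar) := by
    unfold lamVal; split <;> norm_num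
  constructor
  · intro i
    by_cases hi : IsCubeLocalMax f i
    · have := huniq i hi
      simp [this]
    · have hne : i ≠ vstar := fun h => hi (h ▸ hv)
      have hfi : f i < f vstar := by
        rcases lt_or_eq_of_le (hglob i) with h | h
        · exact h
        · exfalso; apply hne; apply huniq
          intro u _; rw [h]; exact hglob u
      have h1 : gameMatrix f vstar vstar = lamVal (f vstar) := by
        simp [gameMatrix, hv]
      rw [h1]
      simp only [gameMatrix]
      rw [if_neg (fun h => hi h.1), if_neg (not_le.mpr hfi)]
      exact hlam1
  · intro j
    by_cases hj : IsCubeLocalMax f j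
    · have := huniq j hj
      simp [this]
    · have h1 : gameMatrix f vstar vstar = lamVal (f vstar) := by
        simp [gameMatrix, hv]
      rw [h1]
      simp only [gameMatrix]
      rw [if_neg (fun h => hj h.2), if_pos (hglob j)]
      exact hlam0
end

section
/- Let d ≥ 1, N = 2^d, and let f : {0,1}^d → ℕ be globally consistent with unique local maximum v*. For a set V ⊆ {0,1}^d, let Γ(V) denote the union of V with the set of all vertices at Hamming distance 1 from some vertex of V. Then for every p ∈ Δ_N with support supp(p) = {i : p(i) > 0} nonempty, every j ∈ Γ(supp(p)) that maximizes f over Γ(supp(p)) is a best-response column for the column player: pᵀ G^f e_j ≥ pᵀ G^f e_{j'} for every j' ∈ {1,…,N}. -/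
open Finset

/-- `Γ V`: the union of `V` with all vertices at Hamming distance 1 from
some vertex of `V`. -/
def cubeNbhd {d : ℕ} (V : Set (Fin d → Bool)) : Set (Fin d → Bool) :=
  V ∪ {u | ∃ v ∈ V, hammingDist u v = 1}

/-- For a globally consistent `f`, and any mixed strategy `p`
of the row player with nonempty support, any `j ∈ Γ(supp p)` maximizing `f`
over `Γ(supp p)` is a best response for the column player:
pᵀ G^f e_j ≥ pᵀ G^f e_{j'} for every column j'. -/
theorem gameMatrix_best_response
    (d : ℕ) (hd : 1 ≤ d)
    (f : (Fin d → Bool) → ℕ)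
    (vstar : Fin d → Bool)
    (hv : IsCubeLocalMax f vstar)
    (huniq : ∀ u, IsCubeLocalMax f u → u = vstar)
    (p : (Fin d → Bool) → ℝ) (hp : p ∈ stdSimplex ℝ (Fin d → Bool))
    (hsupp : {i | 0 < p i}.Nonempty)
    (j : Fin d → Bool)
    (hjmem : j ∈ cubeNbhd {i | 0 < p i})
    (hjmax : ∀ u ∈ cubeNbhd {i | 0 < p i}, f u ≤ f j) :
    ∀ j' : Fin d → Bool,
      ∑ i, p i * gameMatrix f i j' ≤ ∑ i, p i * gameMatrix f i j := by
  classical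
  obtain ⟨hp0, hp1⟩ := hp
  -- lamVal bounds
  have hlam_nn : ∀ k, (0:ℝ) ≤ lamVal k := by
    intro k; unfold lamVal; split_ifs <;> norm_num
  have hlam_le1 : ∀ k, lamVal k ≤ 1 := by
    intro k; unfold lamVal; split_ifs <;> norm_num
  -- f vstar is the global max
  have hglob : ∀ u, f u ≤ f vstar := by
    obtain ⟨b, hb, hbmax⟩ :=
      Finset.exists_max_image (Finset.univ : Finset (Fin d → Bool)) f
        ⟨vstar, Finset.mem_univ _⟩
    have hbloc : IsCubeLocalMax f b := fun u _ => hbmax u (Finset.mem_univ _)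
    have hbe := huniq b hbloc
    intro u
    have := hbmax u (Finset.mem_univ _)
    rwa [hbe] at this
  have hstrict : ∀ u, u ≠ vstar → f u < f vstar := by
    intro u hu
    rcases lt_or_eq_of_le (hglob u) with h | h
    · exact h
    · exact absurd (huniq u (fun w _ => h ▸ hglob w)) hu
  have hGle1 : ∀ i j', gameMatrix f i j' ≤ 1 := by
    intro i j'
    unfold gameMatrix
    split_ifs with h1 h2
    · exact hlam_le1 _
    · norm_num
    · norm_num
  have hGnn : ∀ i j', 0 ≤ gameMatrix f i j' := by
    intro i j'
    unfold gameMatrix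
    split_ifs with h1 h2
    · exact hlam_nn _
    · norm_num
    · norm_num
  intro j'
  by_cases hcase : j = vstar ∧ 0 < p vstar
  · -- termwise comparison
    obtain ⟨hj_eq, hpv⟩ := hcase
    refine Finset.sum_le_sum (fun i _ => ?_)
    refine mul_le_mul_of_nonneg_left ?_ (hp0 i)
    by_cases hiv : i = vstar
    · -- G(v*, j') ≤ λ(f v*) = G(v*, j)
      subst hiv
      have hR : gameMatrix f i j = lamVal (f i) := by
        unfold gameMatrix
        rw [if_pos ⟨(hj_eq ▸ hv : IsCubeLocalMax f i), (hj_eq ▸ hv)⟩]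
      rw [hR]
      unfold gameMatrix
      split_ifs with h1 h2
      · exact le_refl _
      · exact hlam_nn _
      · exact absurd (hglob j') h2
    · -- G(i, j) = 1
      have hniv : ¬ IsCubeLocalMax f i := fun h => hiv (huniq i h)
      have hR : gameMatrix f i j = 1 := by
        unfold gameMatrix
        rw [if_neg (fun h => hniv h.1),
          if_neg (not_le.mpr (hj_eq ▸ hstrict i hiv))]
      rw [hR]; exact hGle1 i j'
  · -- all support entries give G(i,j) = 1
    have hG1 : ∀ i, 0 < p i → gameMatrix f i j = 1 := by
      intro i hip
      have hiΓ : i ∈ cubeNbhd {i | 0 < p i} := Or.inl hip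
      have hfij : f i ≤ f j := hjmax i hiΓ
      have hiv : i ≠ vstar := by
        intro h
        have hjv : j ≠ vstar := fun hj => hcase ⟨hj, h ▸ hip⟩
        have hlt := hstrict j hjv
        rw [← h] at hlt
        exact absurd hfij (not_le.mpr hlt)
      have hniv : ¬ IsCubeLocalMax f i := fun h => hiv (huniq i h)
      have hlt : f i < f j := by
        rcases lt_or_eq_of_le hfij with h | h
        · exact h
        · exfalso
          apply hniv
          intro u hu
          have huΓ : u ∈ cubeNbhd {i | 0 < p i} := Or.inr ⟨i, hip, hu⟩
          exact le_of_le_of_eq (hjmax u huΓ) h.symm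
      unfold gameMatrix
      rw [if_neg (fun h => hniv h.1), if_neg (not_le.mpr hlt)]
    have hRsum : ∑ i, p i * gameMatrix f i j = 1 := by
      rw [← hp1]
      refine Finset.sum_congr rfl (fun i _ => ?_)
      rcases eq_or_lt_of_le (hp0 i) with h | h
      · rw [← h]; ring
      · rw [hG1 i h, mul_one]
    rw [hRsum, ← hp1]
    refine Finset.sum_le_sum (fun i _ => ?_)
    calc p i * gameMatrix f i j' ≤ p i * 1 :=
          mul_le_mul_of_nonneg_left (hGle1 i j') (hp0 i)
      _ = p i := mul_one _
end

section
/- Let d ≥ 1 and f : {0,1}^d → [0,1]. Then the multilinear extension f̃ : [0,1]^d → ℝ, defined by f̃(x) = (1/√d)·Σ_{ξ∈{0,1}^d} f(ξ)·Π_{i:ξ_i=1} x_i · Π_{i:ξ_i=0} (1−x_i), is 1-Lipschitz on [0,1]^d with respect to the Euclidean norm: |f̃(x) − f̃(z)| ≤ ‖x − z‖₂ for all x, z ∈ [0,1]^d. -/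
open Finset

/-- The scaled multilinear extension of `f : {0,1}^d → ℝ`:
f̃(x) = (1/√d)·Σ_{ξ∈{0,1}^d} f(ξ)·Π_{i:ξ_i=1} x_i · Π_{i:ξ_i=0} (1−x_i). -/
noncomputable def mlExt (d : ℕ) (f : (Fin d → Bool) → ℝ) (x : Fin d → ℝ) : ℝ :=
  (1 / Real.sqrt d) *
    ∑ ξ : Fin d → Bool, f ξ * ∏ i, (if ξ i then x i else 1 - x i)


noncomputable def mlS (d : ℕ) (f : (Fin d → Bool) → ℝ) (y : Fin d → ℝ) : ℝ :=
  ∑ ξ : Fin d → Bool, f ξ * ∏ i, (if ξ i then y i else 1 - y i)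

lemma mlS_partition (d : ℕ) (y : Fin d → ℝ) :
    ∑ ξ : Fin d → Bool, ∏ i, (if ξ i then y i else 1 - y i) = 1 := by
  have h : ∏ i : Fin d, ∑ b : Bool, (if b then y i else 1 - y i)
      = ∑ ξ ∈ Fintype.piFinset (fun _ : Fin d => (univ : Finset Bool)),
          ∏ i, (if ξ i then y i else 1 - y i) := Finset.prod_univ_sum _ _
  rw [Fintype.piFinset_univ] at h
  rw [← h]
  simp

lemma mlS_mem (d : ℕ) (f : (Fin d → Bool) → ℝ) (hf : ∀ ξ, f ξ ∈ Set.Icc (0 : ℝ) 1)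
    (y : Fin d → ℝ) (hy : ∀ i, y i ∈ Set.Icc (0 : ℝ) 1) :
    mlS d f y ∈ Set.Icc (0 : ℝ) 1 := by
  have hW : ∀ ξ : Fin d → Bool, 0 ≤ ∏ i, (if ξ i then y i else 1 - y i) := by
    intro ξ
    exact Finset.prod_nonneg fun i _ => by
      by_cases h : ξ i <;> simp [h] <;> [exact (hy i).1; linarith [(hy i).2]]
  constructor
  · exact Finset.sum_nonneg fun ξ _ => mul_nonneg (hf ξ).1 (hW ξ)
  · calc mlS d f y ≤ ∑ ξ : Fin d → Bool, ∏ i, (if ξ i then y i else 1 - y i) :=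
        Finset.sum_le_sum fun ξ _ => by
          nlinarith [(hf ξ).2, hW ξ, (hf ξ).1]
    _ = 1 := mlS_partition d y

/-- Step bound: changing one coordinate changes `mlS` by at most the coordinate change. -/
lemma mlS_step (d : ℕ) (f : (Fin d → Bool) → ℝ) (hf : ∀ ξ, f ξ ∈ Set.Icc (0 : ℝ) 1)
    (y y' : Fin d → ℝ) (i0 : Fin d)
    (hagree : ∀ i, i ≠ i0 → y i = y' i)
    (hy : ∀ i, y i ∈ Set.Icc (0 : ℝ) 1) (hy' : ∀ i, y' i ∈ Set.Icc (0 : ℝ) 1) :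
    |mlS d f y - mlS d f y'| ≤ |y i0 - y' i0| := by
  set u1 : Fin d → ℝ := Function.update y i0 1 with hu1
  set u0 : Fin d → ℝ := Function.update y i0 0 with hu0
  set Δ : ℝ := y i0 - y' i0 with hΔ
  have key : ∀ ξ : Fin d → Bool,
      (∏ i, (if ξ i then y i else 1 - y i)) - (∏ i, (if ξ i then y' i else 1 - y' i))
      = Δ * ((∏ i, (if ξ i then u1 i else 1 - u1 i)) - (∏ i, (if ξ i then u0 i else 1 - u0 i))) := by
    intro ξ
    have e1 : ∏ i, (if ξ i then y i else 1 - y i)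
        = (if ξ i0 then y i0 else 1 - y i0) * ∏ i ∈ univ.erase i0, (if ξ i then y i else 1 - y i) :=
      (Finset.mul_prod_erase univ _ (mem_univ i0)).symm
    have e2 : ∏ i, (if ξ i then y' i else 1 - y' i)
        = (if ξ i0 then y' i0 else 1 - y' i0) * ∏ i ∈ univ.erase i0, (if ξ i then y' i else 1 - y' i) :=
      (Finset.mul_prod_erase univ _ (mem_univ i0)).symm
    have e3 : ∏ i, (if ξ i then u1 i else 1 - u1 i)
        = (if ξ i0 then u1 i0 else 1 - u1 i0) * ∏ i ∈ univ.erase i0, (if ξ i then u1 i else 1 - u1 i) :=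
      (Finset.mul_prod_erase univ _ (mem_univ i0)).symm
    have e4 : ∏ i, (if ξ i then u0 i else 1 - u0 i)
        = (if ξ i0 then u0 i0 else 1 - u0 i0) * ∏ i ∈ univ.erase i0, (if ξ i then u0 i else 1 - u0 i) :=
      (Finset.mul_prod_erase univ _ (mem_univ i0)).symm
    have r2 : ∏ i ∈ univ.erase i0, (if ξ i then y' i else 1 - y' i)
        = ∏ i ∈ univ.erase i0, (if ξ i then y i else 1 - y i) :=
      Finset.prod_congr rfl fun i hi => by
        rw [hagree i (Finset.ne_of_mem_erase hi)]
    have r3 : ∏ i ∈ univ.erase i0, (if ξ i then u1 i else 1 - u1 i)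
        = ∏ i ∈ univ.erase i0, (if ξ i then y i else 1 - y i) :=
      Finset.prod_congr rfl fun i hi => by
        rw [hu1, Function.update_of_ne (Finset.ne_of_mem_erase hi)]
    have r4 : ∏ i ∈ univ.erase i0, (if ξ i then u0 i else 1 - u0 i)
        = ∏ i ∈ univ.erase i0, (if ξ i then y i else 1 - y i) :=
      Finset.prod_congr rfl fun i hi => by
        rw [hu0, Function.update_of_ne (Finset.ne_of_mem_erase hi)]
    rw [e1, e2, e3, e4, r2, r3, r4]
    have hu1v : u1 i0 = 1 := Function.update_self _ _ _
    have hu0v : u0 i0 = 0 := Function.update_self _ _ _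
    rw [hu1v, hu0v]
    by_cases h : ξ i0 <;> simp [h] <;> ring
  have hdiff : mlS d f y - mlS d f y' = Δ * (mlS d f u1 - mlS d f u0) := by
    unfold mlS
    rw [← Finset.sum_sub_distrib, ← Finset.sum_sub_distrib, Finset.mul_sum]
    refine Finset.sum_congr rfl fun ξ _ => ?_
    rw [← mul_sub, ← mul_sub, key ξ]; ring
  have hu1m : ∀ i, u1 i ∈ Set.Icc (0 : ℝ) 1 := by
    intro i
    by_cases h : i = i0
    · subst h; rw [hu1, Function.update_self]; exact ⟨zero_le_one, le_refl 1⟩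
    · rw [hu1, Function.update_of_ne h]; exact hy i
  have hu0m : ∀ i, u0 i ∈ Set.Icc (0 : ℝ) 1 := by
    intro i
    by_cases h : i = i0
    · subst h; rw [hu0, Function.update_self]; exact ⟨le_refl 0, zero_le_one⟩
    · rw [hu0, Function.update_of_ne h]; exact hy i
  have h1 := mlS_mem d f hf u1 hu1m
  have h0 := mlS_mem d f hf u0 hu0m
  rw [hdiff, abs_mul]
  have : |mlS d f u1 - mlS d f u0| ≤ 1 := by
    rw [abs_le]; constructor <;> [linarith [h1.1, h0.2]; linarith [h1.2, h0.1]]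
  calc |Δ| * |mlS d f u1 - mlS d f u0| ≤ |Δ| * 1 :=
        mul_le_mul_of_nonneg_left this (abs_nonneg _)
  _ = |y i0 - y' i0| := by rw [mul_one]

/-- The scaled multilinear extension of a function with
values in [0,1] is 1-Lipschitz on [0,1]^d in the Euclidean norm. -/
theorem mlExt_one_lipschitz
    (d : ℕ) (hd : 1 ≤ d)
    (f : (Fin d → Bool) → ℝ) (hf : ∀ ξ, f ξ ∈ Set.Icc (0 : ℝ) 1)
    (x z : Fin d → ℝ)
    (hx : ∀ i, x i ∈ Set.Icc (0 : ℝ) 1) (hz : ∀ i, z i ∈ Set.Icc (0 : ℝ) 1) :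
    |mlExt d f x - mlExt d f z| ≤ Real.sqrt (∑ i, (x i - z i) ^ 2) := by
  -- hybrids
  set h : ℕ → (Fin d → ℝ) := fun k i => if (i : ℕ) < k then x i else z i with hh
  have hh0 : h 0 = z := by funext i; simp [hh]
  have hhd : h d = x := by funext i; simp [hh, i.isLt]
  have hmem : ∀ k, ∀ i, h k i ∈ Set.Icc (0 : ℝ) 1 := by
    intro k i
    by_cases hlt : (i : ℕ) < k <;> simp [hh, hlt] <;> [exact hx i; exact hz i]
  -- step bound for each k < d
  have hstep : ∀ k, ∀ hk : k < d,
      |mlS d f (h (k+1)) - mlS d f (h k)| ≤ |x ⟨k, hk⟩ - z ⟨k, hk⟩| := by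
    intro k hk
    have := mlS_step d f hf (h (k+1)) (h k) ⟨k, hk⟩
      (fun i hi => by
        have hne : (i : ℕ) ≠ k := fun hc => hi (Fin.ext hc)
        by_cases hlt : (i : ℕ) < k
        · simp [hh, hlt, Nat.lt_succ_of_lt hlt]
        · have : ¬ (i : ℕ) < k + 1 := by omega
          simp [hh, hlt, this])
      (hmem (k+1)) (hmem k)
    have hv1 : h (k+1) ⟨k, hk⟩ = x ⟨k, hk⟩ := by simp [hh]
    have hv2 : h k ⟨k, hk⟩ = z ⟨k, hk⟩ := by simp [hh]
    rwa [hv1, hv2] at this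
  -- telescoping
  have htel : mlS d f x - mlS d f z = ∑ k ∈ range d, (mlS d f (h (k+1)) - mlS d f (h k)) := by
    rw [Finset.sum_range_sub (fun k => mlS d f (h k)), hh0, hhd]
  set a : ℕ → ℝ := fun k => if hk : k < d then |x ⟨k, hk⟩ - z ⟨k, hk⟩| else 0 with ha
  have habs : |mlS d f x - mlS d f z| ≤ ∑ i : Fin d, |x i - z i| := by
    rw [htel]
    calc |∑ k ∈ range d, (mlS d f (h (k+1)) - mlS d f (h k))|
        ≤ ∑ k ∈ range d, |mlS d f (h (k+1)) - mlS d f (h k)| := Finset.abs_sum_le_sum_abs _ _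
    _ ≤ ∑ k ∈ range d, a k := by
        refine Finset.sum_le_sum fun k hk => ?_
        have hkd : k < d := Finset.mem_range.mp hk
        simpa [ha, hkd] using hstep k hkd
    _ = ∑ i : Fin d, a (i : ℕ) := (Fin.sum_univ_eq_sum_range a d).symm
    _ = ∑ i : Fin d, |x i - z i| := Finset.sum_congr rfl fun i _ => by
        simp [ha, i.isLt]
  -- Cauchy–Schwarz
  have hcs : (∑ i : Fin d, |x i - z i|) ^ 2 ≤ (d : ℝ) * ∑ i, (x i - z i) ^ 2 := by
    have := Finset.sum_mul_sq_le_sq_mul_sq univ (fun _ : Fin d => (1:ℝ)) (fun i => |x i - z i|)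
    simpa [sq_abs, Finset.card_univ] using this
  have hsum_nonneg : (0:ℝ) ≤ ∑ i, (x i - z i) ^ 2 :=
    Finset.sum_nonneg fun i _ => sq_nonneg _
  have habs_nonneg : (0:ℝ) ≤ ∑ i : Fin d, |x i - z i| :=
    Finset.sum_nonneg fun i _ => abs_nonneg _
  have hcs' : ∑ i : Fin d, |x i - z i| ≤ Real.sqrt d * Real.sqrt (∑ i, (x i - z i) ^ 2) := by
    rw [← Real.sqrt_mul (Nat.cast_nonneg d)]
    exact (Real.le_sqrt habs_nonneg (by positivity)).mpr hcs
  have hsd : 0 < Real.sqrt d := Real.sqrt_pos.mpr (by exact_mod_cast Nat.lt_of_lt_of_le Nat.zero_lt_one hd)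
  have hml : mlExt d f x - mlExt d f z = (1 / Real.sqrt d) * (mlS d f x - mlS d f z) := by
    unfold mlExt mlS; ring
  rw [hml, abs_mul, abs_of_nonneg (by positivity : (0:ℝ) ≤ 1 / Real.sqrt d)]
  calc (1 / Real.sqrt d) * |mlS d f x - mlS d f z|
      ≤ (1 / Real.sqrt d) * (Real.sqrt d * Real.sqrt (∑ i, (x i - z i) ^ 2)) := by
        apply mul_le_mul_of_nonneg_left (le_trans habs hcs') (by positivity)
  _ = Real.sqrt (∑ i, (x i - z i) ^ 2) := by
        field_simp
end

section
/- Let d ≥ 1, T ≥ 1, let f_1,…,f_T : {0,1}^d → [0,1], and let f̃_1,…,f̃_T be their scaled multilinear extensions. Suppose x_1,…,x_T ∈ [0,1]^d satisfy Σ_{t=1}^{T} f̃_t(x_t) − min_{x∈[0,1]^d} Σ_{t=1}^{T} f̃_t(x) ≤ R. For each t, let y_t be a random vertex of {0,1}^d whose coordinates are independent with P(y_t(i) = 1) = x_t(i). Then E[ Σ_{t=1}^{T} f_t(y_t) ] − min_{ξ∈{0,1}^d} Σ_{t=1}^{T} f_t(ξ) ≤ √d · R. -/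
open Finset

lemma mlExt_vertex (d : ℕ) (f : (Fin d → Bool) → ℝ) (ξ₀ : Fin d → Bool) :
    mlExt d f (fun i => if ξ₀ i then 1 else 0) = (1 / Real.sqrt d) * f ξ₀ := by
  unfold mlExt
  congr 1
  rw [Fintype.sum_eq_single ξ₀]
  · have : (∏ i, (if ξ₀ i then (if ξ₀ i then (1:ℝ) else 0) else 1 - (if ξ₀ i then 1 else 0))) = 1 := by
      apply Finset.prod_eq_one
      intro i _
      by_cases h : ξ₀ i <;> simp [h]
    rw [this, mul_one]
  · intro ξ hξ
    have : ∃ i, ξ i ≠ ξ₀ i := by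
      by_contra h
      push_neg at h
      exact hξ (funext h)
    obtain ⟨i, hi⟩ := this
    have : (∏ j, (if ξ j then (if ξ₀ j then (1:ℝ) else 0) else 1 - (if ξ₀ j then 1 else 0))) = 0 := by
      apply Finset.prod_eq_zero (Finset.mem_univ i)
      cases h1 : ξ i <;> cases h2 : ξ₀ i <;> simp_all
    rw [this, mul_zero]

/-- Randomized-rounding regret transfer: if the iterates
x_1,…,x_T ∈ [0,1]^d have regret at most R with respect to the scaled
multilinear extensions f̃_t (stated as: for every x' in the cube,
Σ_t f̃_t(x_t) − Σ_t f̃_t(x') ≤ R), and y_t is a random vertex with independent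
coordinates P(y_t(i)=1) = x_t(i) (so E[f_t(y_t)] is the Bernoulli-weighted sum
below), then E[Σ_t f_t(y_t)] − min_ξ Σ_t f_t(ξ) ≤ √d·R. -/
theorem randomized_rounding_regret
    (d T : ℕ) (hd : 1 ≤ d) (hT : 1 ≤ T)
    (f : ℕ → (Fin d → Bool) → ℝ)
    (hf : ∀ t ξ, f t ξ ∈ Set.Icc (0 : ℝ) 1)
    (x : ℕ → Fin d → ℝ)
    (hx : ∀ t i, x t i ∈ Set.Icc (0 : ℝ) 1)
    (R : ℝ)
    (hreg : ∀ x' : Fin d → ℝ, (∀ i, x' i ∈ Set.Icc (0 : ℝ) 1) →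
      (∑ t ∈ Icc 1 T, mlExt d (f t) (x t)) - ∑ t ∈ Icc 1 T, mlExt d (f t) x'
        ≤ R) :
    (∑ t ∈ Icc 1 T, ∑ ξ : Fin d → Bool,
        (∏ i, if ξ i then x t i else 1 - x t i) * f t ξ)
      - univ.inf' univ_nonempty (fun ξ : Fin d → Bool => ∑ t ∈ Icc 1 T, f t ξ)
      ≤ Real.sqrt d * R := by
  have hs : (0:ℝ) < Real.sqrt d := Real.sqrt_pos.mpr (by exact_mod_cast Nat.pos_of_ne_zero (by omega))
  -- minimizer vertex
  obtain ⟨ξ₀, -, hξ₀⟩ := Finset.exists_mem_eq_inf' (univ_nonempty (α := Fin d → Bool))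
      (fun ξ : Fin d → Bool => ∑ t ∈ Icc 1 T, f t ξ)
  have hx' : ∀ i, (fun i => if ξ₀ i then (1:ℝ) else 0) i ∈ Set.Icc (0:ℝ) 1 := by
    intro i; by_cases h : ξ₀ i <;> simp [h]
  have hR := hreg _ hx'
  have hsum : ∀ t, (∑ ξ : Fin d → Bool,
      (∏ i, if ξ i then x t i else 1 - x t i) * f t ξ)
      = Real.sqrt d * mlExt d (f t) (x t) := by
    intro t
    unfold mlExt
    rw [← mul_assoc, mul_one_div, div_self hs.ne', one_mul]
    exact Finset.sum_congr rfl fun ξ _ => mul_comm _ _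
  rw [hξ₀]
  calc (∑ t ∈ Icc 1 T, ∑ ξ : Fin d → Bool,
        (∏ i, if ξ i then x t i else 1 - x t i) * f t ξ) - ∑ t ∈ Icc 1 T, f t ξ₀
      = Real.sqrt d * ((∑ t ∈ Icc 1 T, mlExt d (f t) (x t))
          - ∑ t ∈ Icc 1 T, mlExt d (f t) (fun i => if ξ₀ i then (1:ℝ) else 0)) := by
        simp only [hsum, mlExt_vertex]
        rw [← Finset.mul_sum, ← Finset.mul_sum, mul_sub, ← mul_assoc,
          mul_one_div, div_self hs.ne', one_mul]
    _ ≤ Real.sqrt d * R := by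
        exact mul_le_mul_of_nonneg_left hR hs.le
end

section
/- Let N ≥ 1, let H* ⊆ {1,…,N}, let y* : {1,…,N} → {0,1} be an arbitrary labeling, and define ℓ̃ : {1,…,N} × {1,…,N} → {0,1} by ℓ̃(h,x) = 0 if h ∈ H*, x ∈ H* and h ≥ x, and ℓ̃(h,x) = 1 otherwise; define the classification loss ℓ(h; x, y) = ℓ̃(h,x) if y = y*(x), and ℓ(h; x, y) = 1 − ℓ̃(h,x) if y ≠ y*(x). Then for every probability distribution p on {1,…,N} × {0,1}, at least one of the following holds: (i) there exists a pair (x*, y) in the support of p such that the hypothesis h = x* minimizes the expected loss h ↦ Σ_{(x,y)} p(x,y)·ℓ(h; x, y) over all h ∈ {1,…,N}; or (ii) every h ∈ {1,…,N} \ H* minimizes this expected loss. -/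
open Finset

/-- Online binary classification instance: hypotheses and
feature vectors are both `Fin N`, `H*` is the set of good hypotheses, `y* x`
the good label of `x`, ℓ̃(h,x) = 0 iff h,x ∈ H* and h ≥ x (else 1), and the
classification loss is ℓ(h;x,y) = ℓ̃(h,x) if y = y*(x) and 1 − ℓ̃(h,x)
otherwise. For every distribution `p` over labeled examples, either some pair
(x*,y) in the support of `p` is such that the hypothesis h = x* minimizes the
expected loss, or every hypothesis outside H* minimizes the expected loss. -/
theorem classification_erm_structure
    (N : ℕ) (hN : 1 ≤ N)
    (Hstar : Finset (Fin N))
    (ystar : Fin N → Bool)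
    (ℓt : Fin N → Fin N → ℝ)
    (hℓt : ∀ h x, ℓt h x = if h ∈ Hstar ∧ x ∈ Hstar ∧ x ≤ h then 0 else 1)
    (ℓ : Fin N → Fin N × Bool → ℝ)
    (hℓ : ∀ h x y,
      ℓ h (x, y) = if y = ystar x then ℓt h x else 1 - ℓt h x)
    (p : Fin N × Bool → ℝ) (hp : p ∈ stdSimplex ℝ (Fin N × Bool)) :
    (∃ e : Fin N × Bool, 0 < p e ∧
        ∀ h : Fin N, ∑ e', p e' * ℓ e.1 e' ≤ ∑ e', p e' * ℓ h e') ∨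
    (∀ h : Fin N, h ∉ Hstar →
        ∀ h' : Fin N, ∑ e', p e' * ℓ h e' ≤ ∑ e', p e' * ℓ h' e') := by
  obtain ⟨hp0, hp1⟩ := hp
  set d : Fin N → ℝ := fun x => p (x, ystar x) - p (x, !ystar x) with hd
  set S : Fin N → ℝ :=
    fun h => ∑ x ∈ univ.filter (fun x => h ∈ Hstar ∧ x ∈ Hstar ∧ x ≤ h), d x with hS
  have per : ∀ h x, (p (x, true) * ℓ h (x, true) + p (x, false) * ℓ h (x, false))
      = p (x, ystar x) - (if h ∈ Hstar ∧ x ∈ Hstar ∧ x ≤ h then d x else 0) := by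
    intro h x
    rw [hℓ, hℓ, hℓt]
    by_cases hc : h ∈ Hstar ∧ x ∈ Hstar ∧ x ≤ h <;>
      cases hy : ystar x <;> simp [hd, hc, hy] <;> ring
  have key : ∀ h, ∑ e', p e' * ℓ h e' = (∑ x, p (x, ystar x)) - S h := by
    intro h
    rw [Fintype.sum_prod_type]
    have : ∀ x : Fin N, ∑ y : Bool, p (x, y) * ℓ h (x, y)
        = p (x, ystar x) - (if h ∈ Hstar ∧ x ∈ Hstar ∧ x ≤ h then d x else 0) := by
      intro x
      rw [Fintype.sum_bool, per]
    rw [Finset.sum_congr rfl (fun x _ => this x), Finset.sum_sub_distrib]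
    simp only [hS, Finset.sum_filter]
  have hSnot : ∀ h, h ∉ Hstar → S h = 0 := by
    intro h hh
    simp [hS, hh]
  by_cases hmax : ∀ h, S h ≤ 0
  · right
    intro h hh h'
    rw [key, key]
    have := hmax h'
    have := hSnot h hh
    linarith
  · left
    push_neg at hmax
    obtain ⟨hbad, hpos⟩ := hmax
    set T := univ.filter (fun h : Fin N => ∀ h', S h' ≤ S h) with hT'
    have hTne : T.Nonempty := by
      obtain ⟨h1, -, hmaxx⟩ := Finset.exists_max_image univ S ⟨hbad, mem_univ _⟩
      refine ⟨h1, ?_⟩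
      simp only [hT', mem_filter, mem_univ, true_and]
      exact fun h' => hmaxx h' (mem_univ _)
    set h0 := T.min' hTne with hh0
    have h0T : h0 ∈ T := T.min'_mem hTne
    have h0max : ∀ h', S h' ≤ S h0 := by
      simpa [hT', mem_filter] using h0T
    have h0pos : 0 < S h0 := lt_of_lt_of_le hpos (h0max hbad)
    have h0H : h0 ∈ Hstar := by
      by_contra hc
      rw [hSnot h0 hc] at h0pos
      exact lt_irrefl _ h0pos
    have hS0 : S h0 = ∑ x ∈ Hstar.filter (fun x => x ≤ h0), d x := by
      simp only [hS]
      congr 1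
      ext x
      simp [mem_filter, h0H]
    have hd0 : 0 < d h0 := by
      by_contra hdn
      push_neg at hdn
      set B := Hstar.filter (fun x => x < h0) with hB
      have hsplit : Hstar.filter (fun x => x ≤ h0) = insert h0 B := by
        ext x
        simp only [hB, mem_filter, mem_insert]
        constructor
        · rintro ⟨hx, hle⟩
          rcases lt_or_eq_of_le hle with h | h
          · exact Or.inr ⟨hx, h⟩
          · exact Or.inl h
        · rintro (rfl | ⟨hx, hlt⟩)
          · exact ⟨h0H, le_refl _⟩
          · exact ⟨hx, le_of_lt hlt⟩
      have hnotmem : h0 ∉ B := by simp [hB]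
      have hsum : S h0 = d h0 + ∑ x ∈ B, d x := by
        rw [hS0, hsplit, Finset.sum_insert hnotmem]
      have hBsum : 0 < ∑ x ∈ B, d x := by linarith
      have hBne : B.Nonempty := by
        by_contra hc
        rw [Finset.not_nonempty_iff_eq_empty] at hc
        rw [hc, Finset.sum_empty] at hBsum
        exact lt_irrefl _ hBsum
      set h1 := B.max' hBne with hh1
      have h1B : h1 ∈ B := B.max'_mem hBne
      have h1H : h1 ∈ Hstar := (Finset.mem_filter.mp h1B).1
      have h1lt : h1 < h0 := (Finset.mem_filter.mp h1B).2
      have hS1 : S h1 = ∑ x ∈ B, d x := by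
        simp only [hS]
        congr 1
        ext x
        simp only [hB, mem_filter, mem_univ, true_and]
        constructor
        · rintro ⟨-, hx, hle⟩
          exact ⟨hx, lt_of_le_of_lt hle h1lt⟩
        · rintro ⟨hx, hlt⟩
          exact ⟨h1H, hx, B.le_max' x (Finset.mem_filter.mpr ⟨hx, hlt⟩)⟩
      have h1max : ∀ h', S h' ≤ S h1 := by
        intro h'
        rw [hS1]
        linarith [h0max h']
      have h1T : h1 ∈ T := by
        simp only [hT', mem_filter, mem_univ, true_and]
        exact h1max
      have := T.min'_le h1 h1T
      rw [← hh0] at this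
      exact absurd (lt_of_le_of_lt this h1lt) (lt_irrefl _)
    refine ⟨(h0, ystar h0), ?_, ?_⟩
    · have hnn := hp0 (h0, !ystar h0)
      simp only [hd] at hd0
      linarith
    · intro h
      rw [key, key]
      linarith [h0max h]
end
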